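/- arXiv:0707.2813 — 4 statements merged into one kernel-verified Lean document; each statement's English description precedes it below -/
import Mathlib

section
/- Let y_1 > y_2 > … > y_N and x_1 > x_2 > … > x_N be integers. Then det[F_{k,l}(x_{N+1−l} − y_{N+1−k}, 0, 0)]_{1≤k,l≤N} equals 1 if x_i = y_i for every i = 1,…,N, and equals 0 otherwise. -/
open Complex MeasureTheory
open scoped Real

/-- `F N v k l x a b r` is the contour integral
`(1/(2πi)) ∮_{|z|=r} z^{x−1} e^{bz + a/z}
  (∏_{i=1}^{k−1} (1 − v_{N+1−i} z)) / (∏_{j=1}^{l−1} (1 − v_{N+1−j} z)) dz`. -/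
noncomputable def F (N : ℕ) (v : ℕ → ℝ) (k l : ℕ) (x : ℤ) (a b r : ℝ) : ℂ :=
  (2 * (Real.pi : ℂ) * Complex.I)⁻¹ *
    ∮ z in C(0, r), z ^ (x - 1) * Complex.exp ((b : ℂ) * z + (a : ℂ) / z) *
      (∏ i ∈ Finset.range (k - 1), (1 - (v (N - i) : ℂ) * z)) /
      ∏ j ∈ Finset.range (l - 1), (1 - (v (N - j) : ℂ) * z)

/-!
Write `a i = x (rev i)`, `b i = y (rev i)` (strictly increasing) and
`P_k(z) = ∏_{i<k} (1 - v_{N-i} z)`; entry `(k, l)` is `(2πi)⁻¹ ∮ z^{a_l - b_k - 1} P_k / P_l`.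
Since `P_l` has no zero in the closed disc, this vanishes when `a_l > b_k` (holomorphic integrand).
For `l ≤ k`, `P_k / P_l` is a polynomial of degree `≤ k - l` and the entry is its coefficient of
`z^{b_k - a_l}`, which vanishes when `b_k - a_l > k - l`; on the diagonal it is `[a_k = b_k]`.
For a permutation `σ ≠ 1` and its largest moved point `j`, both `σ j` and `σ⁻¹ j` are `< j`, and
`a_{σ⁻¹ j} + (j - σ⁻¹ j) ≤ a_j ≤ b_{σ j} < b_j` shows that one of the entries `(σ j, j)` and
`(j, σ⁻¹ j)` vanishes. So only the identity contributes to the determinant.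
-/

open Metric Set Finset Polynomial

theorem circleIntegral_zpow {r : ℝ} (hr : 0 < r) (m : ℤ) :
    ∮ z in C(0, r), z ^ m = if m = -1 then 2 * π * I else 0 := by
  split_ifs with hm
  · subst hm
    simpa using circleIntegral.integral_sub_inv_of_mem_ball (c := 0) (w := 0) (mem_ball_self hr)
  · simpa using circleIntegral.integral_sub_zpow_of_ne hm 0 0 r

theorem circleIntegral_zpow_mul_eval {r : ℝ} (hr : 0 < r) (p : ℂ[X]) (n : ℕ) :
    ∮ z in C(0, r), z ^ (-(n : ℤ) - 1) * p.eval z = 2 * π * I * p.coeff n := by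
  induction p using Polynomial.induction_on' with
  | add p q hp hq =>
    have hint (s : ℂ[X]) : CircleIntegrable (fun z ↦ z ^ (-(n : ℤ) - 1) * s.eval z) 0 r :=
      ((continuousOn_id.zpow₀ _ fun z hz ↦ Or.inl (ne_of_mem_sphere hz hr.ne')).mul
        s.continuous.continuousOn).circleIntegrable hr.le
    simp only [eval_add, mul_add, coeff_add]
    rw [circleIntegral.integral_add (hint p) (hint q), hp, hq]
  | monomial m c =>
    have hmon : EqOn (fun z ↦ z ^ (-(n : ℤ) - 1) * (monomial m c).eval z)
        (fun z ↦ c * z ^ ((m : ℤ) - n - 1)) (sphere 0 r) := fun z hz ↦ by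
      simp only [eval_monomial, ← zpow_natCast]
      rw [mul_left_comm, ← zpow_add₀ (ne_of_mem_sphere hz hr.ne')]
      ring_nf
    rw [circleIntegral.integral_congr hr.le hmon, circleIntegral.integral_const_mul,
      circleIntegral_zpow hr, coeff_monomial]
    simp only [show ((m : ℤ) - n - 1 = -1 ↔ m = n) by omega]
    split_ifs <;> ring

theorem circleIntegral_zpow_mul_eval_eq_zero {r : ℝ} (hr : 0 < r) (p : ℂ[X]) {x : ℤ}
    (hx : x < -p.natDegree) : ∮ z in C(0, r), z ^ (x - 1) * p.eval z = 0 := by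
  obtain ⟨n, rfl⟩ : ∃ n : ℕ, x = -n := ⟨(-x).toNat, by omega⟩
  rw [circleIntegral_zpow_mul_eval hr, coeff_eq_zero_of_natDegree_lt (by omega), mul_zero]

theorem circleIntegral_zpow_mul_eq_zero {r : ℝ} (hr : 0 < r) {f : ℂ → ℂ}
    (hf : DifferentiableOn ℂ f (closedBall 0 r)) {m : ℤ} (hm : 0 ≤ m) :
    ∮ z in C(0, r), z ^ m * f z = 0 := by
  lift m to ℕ using hm
  simp only [zpow_natCast]
  exact (((differentiable_pow m).differentiableOn.mul hf).diffContOnCl_ball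
    subset_rfl).circleIntegral_eq_zero hr.le

section

variable {N : ℕ} {v : ℕ → ℝ} {r : ℝ}

theorem F_zero_zero (k l : ℕ) (x : ℤ) :
    F N v (k + 1) (l + 1) x 0 0 r = (2 * π * I)⁻¹ * ∮ z in C(0, r), z ^ (x - 1) *
      (∏ i ∈ range k, (1 - (v (N - i) : ℂ) * z)) / ∏ j ∈ range l, (1 - (v (N - j) : ℂ) * z) := by
  simp [F]

theorem prod_one_sub_mul_ne_zero (hvr : ∀ i, 1 ≤ i → i ≤ N → |v i| * r < 1) {l : ℕ}
    (hl : l ≤ N) {z : ℂ} (hz : ‖z‖ ≤ r) : ∏ j ∈ range l, (1 - (v (N - j) : ℂ) * z) ≠ 0 := by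
  refine prod_ne_zero_iff.2 fun j hj ↦ sub_ne_zero.2 fun h ↦ ?_
  have hj : j < l := mem_range.1 hj
  have h1 : ‖(v (N - j) : ℂ) * z‖ < 1 := by
    rw [norm_mul, norm_real, Real.norm_eq_abs]
    exact (mul_le_mul_of_nonneg_left hz (abs_nonneg _)).trans_lt (hvr _ (by omega) (by omega))
  simp [← h] at h1

variable (hvr : ∀ i, 1 ≤ i → i ≤ N → |v i| * r < 1) (hr : 0 < r)
include hvr hr

theorem F_eq_zero_of_one_le {k l : ℕ} (hl : l ≤ N) {x : ℤ} (hx : 1 ≤ x) :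
    F N v (k + 1) (l + 1) x 0 0 r = 0 := by
  have hholo : DifferentiableOn ℂ (fun z ↦ (∏ i ∈ range k, (1 - (v (N - i) : ℂ) * z)) /
      ∏ j ∈ range l, (1 - (v (N - j) : ℂ) * z)) (closedBall 0 r) := by
    refine DifferentiableOn.div (by fun_prop) (by fun_prop) fun z hz ↦ ?_
    exact prod_one_sub_mul_ne_zero hvr hl (mem_closedBall_zero_iff.1 hz)
  rw [F_zero_zero]
  simp_rw [mul_div_assoc]
  rw [circleIntegral_zpow_mul_eq_zero hr hholo (by omega), mul_zero]

theorem F_eq_circleIntegral_eval {k l : ℕ} (hlk : l ≤ k) (hl : l ≤ N) (x : ℤ) :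
    F N v (k + 1) (l + 1) x 0 0 r = (2 * π * I)⁻¹ * ∮ z in C(0, r), z ^ (x - 1) *
      (∏ i ∈ Ico l k, (1 - C (v (N - i) : ℂ) * X)).eval z := by
  rw [F_zero_zero]
  congr 1
  refine circleIntegral.integral_congr hr.le fun z hz ↦ ?_
  have hden := prod_one_sub_mul_ne_zero hvr hl (mem_sphere_zero_iff_norm.1 hz).le
  simp only [eval_prod, eval_sub, eval_one, eval_mul, eval_C, eval_X]
  rw [← prod_range_mul_prod_Ico _ hlk, mul_div_assoc, mul_div_cancel_left₀ _ hden]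

theorem F_eq_zero_of_lt_neg {k l : ℕ} (hlk : l ≤ k) (hl : l ≤ N) {x : ℤ}
    (hx : x < -((k - l : ℕ) : ℤ)) : F N v (k + 1) (l + 1) x 0 0 r = 0 := by
  have hdeg : (∏ i ∈ Ico l k, (1 - C (v (N - i) : ℂ) * X)).natDegree ≤ k - l := by
    refine (natDegree_prod_le _ _).trans ((sum_le_card_nsmul _ _ 1 fun i _ ↦ ?_).trans (by simp))
    compute_degree
  rw [F_eq_circleIntegral_eval hvr hr hlk hl, circleIntegral_zpow_mul_eval_eq_zero hr _ (by omega),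
    mul_zero]

theorem F_diag {l : ℕ} (hl : l ≤ N) (x : ℤ) :
    F N v (l + 1) (l + 1) x 0 0 r = if x = 0 then 1 else 0 := by
  rw [F_eq_circleIntegral_eval hvr hr le_rfl hl]
  simp only [Ico_self, Finset.prod_empty, eval_one, mul_one]
  rw [circleIntegral_zpow hr]
  simp only [show x - 1 = -1 ↔ x = 0 by omega]
  split_ifs
  exacts [inv_mul_cancel₀ two_pi_I_ne_zero, mul_zero _]

end

theorem Equiv.Perm.exists_lt_and_inv_lt {α : Type*} [Fintype α] [LinearOrder α] {σ : Perm α}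
    (hσ : σ ≠ 1) : ∃ j, σ j < j ∧ σ⁻¹ j < j := by
  have hne : σ.support.Nonempty := nonempty_iff_ne_empty.2 (mt support_eq_empty_iff.1 hσ)
  set j := σ.support.max' hne
  have hfix : ∀ i, j < i → σ i = i := fun i hi ↦
    notMem_support.1 fun hmem ↦ (σ.support.le_max' i hmem).not_gt hi
  have hj : σ j ≠ j := mem_support.1 (σ.support.max'_mem hne)
  have hj' : σ⁻¹ j ≠ j := fun h ↦ hj (Perm.inv_eq_iff_eq.1 h).symm
  exact ⟨j, hj.lt_or_gt.resolve_right fun h ↦ hj (σ.injective (hfix _ h)),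
    hj'.lt_or_gt.resolve_right fun h ↦ hj' (by simpa using (hfix _ h).symm)⟩

theorem Matrix.det_eq_prod_diag_of_exists_eq_zero {R n : Type*} [CommRing R] [Fintype n]
    [DecidableEq n] (M : Matrix n n R) (h : ∀ σ : Equiv.Perm n, σ ≠ 1 → ∃ i, M (σ i) i = 0) :
    M.det = ∏ i, M i i := by
  rw [det_apply, sum_eq_single_of_mem 1 (mem_univ _) fun σ _ hσ ↦ ?_]
  · simp
  · obtain ⟨i, hi⟩ := h σ hσ
    rw [prod_eq_zero (f := fun j ↦ M (σ j) j) (mem_univ i) hi, smul_zero]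

theorem StrictMono.add_sub_le {n : ℕ} {a : Fin n → ℤ} (ha : StrictMono a) {i j : Fin n}
    (hij : i ≤ j) : a i + ((j : ℕ) - (i : ℕ) : ℤ) ≤ a j := by
  obtain ⟨j, hj⟩ := j
  rw [Fin.le_def] at hij
  induction j with
  | zero =>
    obtain rfl : i = ⟨0, hj⟩ := Fin.ext (by simpa using hij)
    simp
  | succ j ih =>
    rcases (show (i : ℕ) ≤ j ∨ (i : ℕ) = j + 1 by simp at hij; omega) with hle | heq
    · have h1 := ih (by omega) hle
      have h2 := ha (show (⟨j, by omega⟩ : Fin n) < ⟨j + 1, hj⟩ from Fin.mk_lt_mk.2 j.lt_succ_self)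
      push_cast at h1 ⊢
      omega
    · obtain rfl : i = ⟨j + 1, hj⟩ := Fin.ext heq
      simp

theorem Matrix.det_eq_prod_diag_of_zero_pattern {R : Type*} [CommRing R] {n : ℕ}
    (M : Matrix (Fin n) (Fin n) R) {a b : Fin n → ℤ} (ha : StrictMono a) (hb : StrictMono b)
    (hupper : ∀ k l, k < l → b k < a l → M k l = 0)
    (hlower : ∀ k l, l < k → a l + ((k : ℕ) - (l : ℕ) : ℤ) < b k → M k l = 0) :
    M.det = ∏ i, M i i := by
  refine M.det_eq_prod_diag_of_exists_eq_zero fun σ hσ ↦ ?_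
  obtain ⟨j, hσj, hσj'⟩ := σ.exists_lt_and_inv_lt hσ
  by_contra! hne
  have h1 : a j ≤ b (σ j) := not_lt.1 fun h ↦ hne j (hupper _ _ hσj h)
  have h2 : b j ≤ a (σ⁻¹ j) + ((j : ℕ) - (σ⁻¹ j : ℕ) : ℤ) :=
    not_lt.1 fun h ↦ hne (σ⁻¹ j) (hlower _ _ (by simpa using hσj') (by simpa using h))
  have h3 := ha.add_sub_le hσj'.le
  have h4 := hb hσj
  omega

theorem stmt1_general (N : ℕ) (v : ℕ → ℝ)
    (hv : ∀ i, 1 ≤ i → i ≤ N → 0 < v i)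
    (r : ℝ) (hr : 0 < r) (hr' : ∀ j, 1 ≤ j → j ≤ N → r < 1 / v j)
    (y x : Fin N → ℤ) (hy : StrictAnti y) (hx : StrictAnti x) :
    Matrix.det (Matrix.of fun k l : Fin N =>
        F N v ((k : ℕ) + 1) ((l : ℕ) + 1) (x l.rev - y k.rev) 0 0 r)
      = if ∀ i, x i = y i then 1 else 0 := by
  have hvr : ∀ i, 1 ≤ i → i ≤ N → |v i| * r < 1 := fun i hi hiN ↦ by
    have := hv i hi hiN
    rw [abs_of_pos this, ← lt_div_iff₀' this]
    exact hr' i hi hiN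
  rw [Matrix.det_eq_prod_diag_of_zero_pattern _ (hx.comp Fin.rev_strictAnti)
      (hy.comp Fin.rev_strictAnti) ?upper ?lower]
  case upper =>
    intro k l _ h
    exact F_eq_zero_of_one_le hvr hr l.is_lt.le (by simp at h; omega)
  case lower =>
    intro k l hlk h
    exact F_eq_zero_of_lt_neg hvr hr hlk.le l.is_lt.le (by simp at h; omega)
  simp only [Matrix.of_apply, F_diag hvr hr (Fin.is_lt _).le, sub_eq_zero, prod_boole,
    Finset.mem_univ, forall_const]
  congr 1
  exact propext (Fin.rev_surjective.forall (p := fun i ↦ x i = y i)).symm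

/-- for strictly decreasing integer vectors `y` and `x` (indexed so that
`y 0 > y 1 > ⋯` corresponds to `y_1 > y_2 > ⋯ > y_N`), the determinant
`det[F_{k,l}(x_{N+1−l} − y_{N+1−k}, 0, 0)]` is `1` if `x = y` and `0` otherwise. -/
theorem stmt1 (N : ℕ) (hN : 1 ≤ N) (v : ℕ → ℝ)
    (hv : ∀ i, 1 ≤ i → i ≤ N → 0 < v i)
    (r : ℝ) (hr : 0 < r) (hr' : ∀ j, 1 ≤ j → j ≤ N → r < 1 / v j)
    (y x : Fin N → ℤ) (hy : StrictAnti y) (hx : StrictAnti x) :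
    Matrix.det (Matrix.of fun k l : Fin N =>
        F N v ((k : ℕ) + 1) ((l : ℕ) + 1) (x l.rev - y k.rev) 0 0 r)
      = if ∀ i, x i = y i then 1 else 0 :=
  stmt1_general N v hv r hr hr' y x hy hx
end

section
/- Fix integers y_1,…,y_N and reals a, b, and for (x_1,…,x_N) ∈ ℤ^N define W(x_1,…,x_N) = det[ v_{N+1−l}^{x_{N+1−l}} · F_{k,l}(x_{N+1−l} − y_{N+1−k}, a, b) ]_{1≤k,l≤N}. Then for every 2 ≤ j ≤ N and every point of ℤ^N whose (j−1)-st coordinate equals its j-th coordinate x_j, the value of W at that point equals (v_j / v_{j−1}) times the value of W at the point obtained by replacing the (j−1)-st coordinate by x_j + 1 and leaving all other coordinates unchanged. -/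
open Complex MeasureTheory
open scoped Real

/-- `W N v y a b r X = det[ v_{N+1−l}^{X_{N+1−l}} F_{k,l}(X_{N+1−l} − y_{N+1−k}, a, b) ]`
(all indices 1-based in the mathematical notation; `X i.rev` is `X_{N+1-(i+1)}`
for the 0-based index `i`). -/
noncomputable def W (N : ℕ) (v : ℕ → ℝ) (y : Fin N → ℤ) (a b r : ℝ)
    (X : Fin N → ℤ) : ℂ :=
  Matrix.det (Matrix.of fun k l : Fin N =>
    (v (N - (l : ℕ)) : ℂ) ^ X l.rev *
      F N v ((k : ℕ) + 1) ((l : ℕ) + 1) (X l.rev - y k.rev) a b r)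

/-!
Dividing the integrand of `F_{k,l}` by `1 - v_{N+1-l} z` (partial fractions on the circle) gives
`F_{k,l}(x) = F_{k,l+1}(x) - v_{N+1-l} F_{k,l+1}(x+1)`. If `x_{j-1} = x_j = x`, then with
`l = N+1-j` the columns of `W` belonging to these coordinates are `v_{j-1}^x F_{k,l+1}(x - y)` and
`v_j^x F_{k,l}(x - y)`. Subtracting `(v_{j-1}/v_j)^x` times the second from the first leaves
`v_j v_{j-1}^x F_{k,l+1}(x + 1 - y)`, which is `v_j / v_{j-1}` times the corresponding column at the
shifted point.
-/

open Metric Finset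

theorem circleIntegral_eq_div_sub_mul_div {f : ℂ → ℂ} {c w : ℂ} {R : ℝ} (hR : 0 ≤ R)
    (hf : ContinuousOn f (sphere c R)) (hw : ∀ z ∈ sphere c R, 1 - w * z ≠ 0) :
    (∮ z in C(c, R), f z) =
      (∮ z in C(c, R), f z / (1 - w * z)) - w * ∮ z in C(c, R), z * f z / (1 - w * z) := by
  have hden : ContinuousOn (fun z : ℂ ↦ 1 - w * z) (sphere c R) := by fun_prop
  have h₁ : CircleIntegrable (fun z ↦ f z / (1 - w * z)) c R :=
    (hf.div hden hw).circleIntegrable hR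
  have h₂ : CircleIntegrable (fun z ↦ w * (z * f z / (1 - w * z))) c R :=
    (continuousOn_const.mul ((continuousOn_id.mul hf).div hden hw)).circleIntegrable hR
  rw [← circleIntegral.integral_const_mul, ← circleIntegral.integral_sub h₁ h₂]
  refine circleIntegral.integral_congr hR fun z hz ↦ ?_
  have := hw z hz
  field_simp

theorem Complex.one_sub_ofReal_mul_ne_zero {c r : ℝ} (hc : 0 < c) (hcr : r < 1 / c) {z : ℂ}
    (hz : z ∈ sphere (0 : ℂ) r) : 1 - (c : ℂ) * z ≠ 0 := by
  rw [sub_ne_zero]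
  intro h
  have := congrArg norm h
  rw [lt_div_iff₀ hc] at hcr
  simp [mem_sphere_zero_iff_norm.mp hz, abs_of_pos hc] at this
  linarith

namespace F

variable (N : ℕ) (v : ℕ → ℝ) (k l : ℕ) (x : ℤ) (a b : ℝ)

noncomputable def integrand (z : ℂ) : ℂ :=
  z ^ (x - 1) * Complex.exp ((b : ℂ) * z + (a : ℂ) / z) *
    (∏ i ∈ range (k - 1), (1 - (v (N - i) : ℂ) * z)) /
      ∏ j ∈ range (l - 1), (1 - (v (N - j) : ℂ) * z)

theorem eq_integral (r : ℝ) :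
    F N v k l x a b r =
      (2 * (Real.pi : ℂ) * Complex.I)⁻¹ * ∮ z in C(0, r), integrand N v k l x a b z :=
  rfl

variable {N v k l x a b}

theorem integrand_succ_right (m : ℕ) (z : ℂ) :
    integrand N v k (m + 2) x a b z =
      integrand N v k (m + 1) x a b z / (1 - (v (N - m) : ℂ) * z) := by
  simp [integrand, prod_range_succ, div_div]

theorem integrand_add_one {z : ℂ} (hz : z ≠ 0) :
    integrand N v k l (x + 1) a b z = z * integrand N v k l x a b z := by
  simp only [integrand, add_sub_cancel_right, zpow_sub_one₀ hz]
  field_simp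

variable {r : ℝ}

theorem continuousOn_integrand (hr : r ≠ 0) (hD : ∀ z ∈ sphere (0 : ℂ) r,
      ∏ i ∈ range (l - 1), (1 - (v (N - i) : ℂ) * z) ≠ 0) :
    ContinuousOn (integrand N v k l x a b) (sphere 0 r) := by
  have h0 : ∀ z ∈ sphere (0 : ℂ) r, z ≠ 0 := fun z hz ↦
    ne_zero_of_mem_sphere hr ⟨z, hz⟩
  have h0' : ∀ z ∈ sphere (0 : ℂ) r, z ≠ 0 ∨ 0 ≤ x - 1 := fun z hz ↦ .inl (h0 z hz)
  exact ContinuousOn.div (by fun_prop (disch := assumption)) (by fun_prop) hD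

theorem prod_one_sub_mul_ne_zero (hv : ∀ i, 1 ≤ i → i ≤ N → 0 < v i)
    (hr' : ∀ j, 1 ≤ j → j ≤ N → r < 1 / v j) {m : ℕ} (hm : m ≤ N) {z : ℂ}
    (hz : z ∈ sphere (0 : ℂ) r) : ∏ i ∈ range m, (1 - (v (N - i) : ℂ) * z) ≠ 0 :=
  prod_ne_zero_iff.mpr fun i hi ↦ by
    have := mem_range.mp hi
    exact Complex.one_sub_ofReal_mul_ne_zero (hv _ (by omega) (by omega))
      (hr' _ (by omega) (by omega)) hz

theorem succ_eq_sub (hv : ∀ i, 1 ≤ i → i ≤ N → 0 < v i) (hr : 0 < r)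
    (hr' : ∀ j, 1 ≤ j → j ≤ N → r < 1 / v j) {m : ℕ} (hm : m < N) :
    F N v k (m + 1) x a b r =
      F N v k (m + 2) x a b r - v (N - m) * F N v k (m + 2) (x + 1) a b r := by
  have hf : ContinuousOn (integrand N v k (m + 1) x a b) (sphere 0 r) :=
    continuousOn_integrand hr.ne' fun _ hz ↦ prod_one_sub_mul_ne_zero hv hr' hm.le hz
  have hw : ∀ z ∈ sphere (0 : ℂ) r, 1 - (v (N - m) : ℂ) * z ≠ 0 := fun z hz ↦
    Complex.one_sub_ofReal_mul_ne_zero (hv _ (by omega) (by omega))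
      (hr' _ (by omega) (by omega)) hz
  have hshift : Set.EqOn (fun z ↦ z * integrand N v k (m + 1) x a b z / (1 - v (N - m) * z))
      (integrand N v k (m + 2) (x + 1) a b) (sphere 0 r) := fun z hz ↦ by
    simp only [integrand_succ_right, mul_div_assoc,
      integrand_add_one (ne_zero_of_mem_sphere hr.ne' ⟨z, hz⟩)]
  simp only [eq_integral, circleIntegral_eq_div_sub_mul_div hr.le hf hw,
    ← integrand_succ_right, circleIntegral.integral_congr hr.le hshift]
  ring

theorem column_relation (hv : ∀ i, 1 ≤ i → i ≤ N → 0 < v i) (hr : 0 < r)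
    (hr' : ∀ j, 1 ≤ j → j ≤ N → r < 1 / v j) {j : ℕ} (hj2 : 2 ≤ j) (hjN : j ≤ N)
    (n : ℤ) :
    (v (j - 1) : ℂ) ^ n * F N v k (N - j + 2) x a b r =
      ((v j / v (j - 1) : ℝ) : ℂ) *
          ((v (j - 1) : ℂ) ^ (n + 1) * F N v k (N - j + 2) (x + 1) a b r) +
        ((v (j - 1) : ℂ) / v j) ^ n * ((v j : ℂ) ^ n * F N v k (N - j + 1) x a b r) := by
  have hu : (v (j - 1) : ℂ) ≠ 0 := mod_cast (hv _ (by omega) (by omega)).ne'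
  have hw : (v j : ℂ) ≠ 0 := mod_cast (hv _ (by omega) hjN).ne'
  rw [succ_eq_sub hv hr hr' (by omega : N - j < N), show N - (N - j) = j by omega,
    zpow_add_one₀ hu, div_zpow]
  push_cast
  field_simp
  ring

end F

theorem Matrix.det_eq_mul_det_of_col_eq_mul_add_col {n R : Type*} [Fintype n] [DecidableEq n]
    [CommRing R] {M M' : Matrix n n R} {i j : n} (hij : i ≠ j) (c d : R)
    (hcol : ∀ k, M k i = c * M' k i + d * M k j) (hrest : ∀ k l, l ≠ i → M k l = M' k l) :
    M.det = c * M'.det := by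
  set A := M'.updateCol i (c • fun k ↦ M' k i)
  have hM : M = A.updateCol i fun k ↦ A k i + d • A k j := by
    ext k l
    rcases eq_or_ne l i with rfl | hl
    · simp [A, hcol, hrest k j hij.symm, updateCol_ne hij.symm]
    · simp [A, hrest k l hl, updateCol_ne hl]
  rw [hM, det_updateCol_add_smul_self A hij, det_updateCol_smul, updateCol_eq_self]

/-- if the (j−1)-st coordinate equals the j-th coordinate `x_j`, then
`W` at that point equals `(v_j/v_{j−1})` times `W` at the point where the (j−1)-st
coordinate is replaced by `x_j + 1`. -/
theorem stmt4 (N : ℕ) (v : ℕ → ℝ)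
    (hv : ∀ i, 1 ≤ i → i ≤ N → 0 < v i)
    (r : ℝ) (hr : 0 < r) (hr' : ∀ j, 1 ≤ j → j ≤ N → r < 1 / v j)
    (y : Fin N → ℤ) (a b : ℝ)
    (j : ℕ) (hj2 : 2 ≤ j) (hjN : j ≤ N) (X : Fin N → ℤ)
    (hX : X ⟨j - 2, by omega⟩ = X ⟨j - 1, by omega⟩) :
    W N v y a b r X
      = ((v j / v (j - 1) : ℝ) : ℂ) *
        W N v y a b r (Function.update X ⟨j - 2, by omega⟩ (X ⟨j - 1, by omega⟩ + 1)) := by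
  set p : Fin N := ⟨j - 2, by omega⟩
  set q : Fin N := ⟨j - 1, by omega⟩
  have hpq : p.rev ≠ q.rev := Fin.rev_injective.ne (by simp [p, q, Fin.ext_iff]; omega)
  refine Matrix.det_eq_mul_det_of_col_eq_mul_add_col hpq _ ((v (j - 1) / v j : ℂ) ^ X q)
    (fun k ↦ ?_) (fun k l hl ↦ ?_)
  · simp only [Matrix.of_apply, Fin.rev_rev, Function.update_self, hX, Fin.val_rev, p, q]
    rw [show N - (N - (j - 2 + 1)) = j - 1 by omega, show N - (N - (j - 1 + 1)) = j by omega,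
      show N - (j - 2 + 1) + 1 = N - j + 2 by omega, show N - (j - 1 + 1) + 1 = N - j + 1 by omega,
      add_sub_right_comm]
    exact F.column_relation hv hr hr' hj2 hjN _
  · have : l.rev ≠ p := fun h ↦ hl (by rw [← h, Fin.rev_rev])
    simp only [Matrix.of_apply, Function.update_of_ne this]
end

section
/- For all reals a, b and every x ∈ ℤ: (i) for 1 ≤ k ≤ N and 1 ≤ l ≤ N−1, the series ∑_{y ≥ x} v_{N+1−l}^{y−x} F_{k,l}(y,a,b) converges absolutely and its sum equals F_{k,l+1}(x,a,b); (ii) for 2 ≤ k ≤ N and 1 ≤ l ≤ N, the series ∑_{y ≥ x} v_{N+2−k}^{y−x} F_{k,l}(y,a,b) converges absolutely and its sum equals F_{k−1,l}(x,a,b). -/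
open Complex MeasureTheory
open scoped Real

/-! On the circle `|z| = r` every relevant `v_j` satisfies `|v_j z| < 1`, so the geometric series
`∑ (v z)^m` converges uniformly there to `(1 - v z)⁻¹`; dominated convergence lets it be summed
under the contour integral, giving
`∑_m v^m F_{k,l}(x+m) = (2πi)⁻¹ ∮ (1 - v z)⁻¹ z^{x-1} e^{bz+a/z} ∏(…) / ∏(…) dz`.
With `v = v_{N+1-l}` the extra factor is the next factor of the denominator product, giving
`F_{k,l+1}`; with `v = v_{N+2-k}` it cancels the last factor of the numerator product, giving
`F_{k-1,l}`. -/

open Metric Filter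

section GeometricSeries

variable {E : Type*} [NormedAddCommGroup E] [NormedSpace ℂ E] {f : ℂ → E} {c w : ℂ} {R : ℝ}

theorem hasSum_circleIntegral_geometric_smul (hf : CircleIntegrable f c R)
    (hw : ‖w‖ * |R| < 1) :
    HasSum (fun n : ℕ => ∮ z in C(c, R), (w * (z - c)) ^ n • f z)
      (∮ z in C(c, R), (1 - w * (z - c))⁻¹ • f z) := by
  have hwR : 0 ≤ ‖w‖ * |R| := by positivity
  refine intervalIntegral.hasSum_integral_of_dominated_convergence
      (fun n θ => |R| * ‖f (circleMap c R θ)‖ * (‖w‖ * |R|) ^ n) (fun n => ?_) (fun n => ?_)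
      ?_ ?_ ?_
  · simp only [deriv_circleMap]
    apply_rules [AEStronglyMeasurable.smul, hf.def'.1] <;> apply Measurable.aestronglyMeasurable
    · fun_prop
    · fun_prop
  · refine Eventually.of_forall fun θ _ => le_of_eq ?_
    simp only [deriv_circleMap, norm_smul, norm_mul, norm_pow, norm_circleMap_zero, norm_I,
      circleMap_sub_center]
    ring
  · exact Eventually.of_forall fun _ _ => (summable_geometric_of_lt_one hwR hw).mul_left _
  · simpa only [tsum_mul_left, tsum_geometric_of_lt_one hwR hw] using
      (hf.norm.const_mul _).mul_continuousOn continuousOn_const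
  · refine Eventually.of_forall fun θ _ => HasSum.const_smul _ ?_
    have hlt : ‖w * (circleMap c R θ - c)‖ < 1 := by
      simpa [circleMap_sub_center, norm_circleMap_zero] using hw
    simpa only [← smul_smul, tsum_geometric_of_norm_lt_one hlt] using
      ((hasSum_geometric_of_norm_lt_one hlt).smul_const (f (circleMap c R θ)))

theorem summable_norm_circleIntegral_geometric_smul (hf : ContinuousOn f (sphere c |R|))
    (hw : ‖w‖ * |R| < 1) :
    Summable fun n : ℕ => ‖∮ z in C(c, R), (w * (z - c)) ^ n • f z‖ := by
  obtain ⟨C, hC⟩ := (isCompact_sphere c |R|).exists_bound_of_continuousOn hf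
  refine Summable.of_nonneg_of_le (fun n => norm_nonneg _) (fun n => ?_)
    ((summable_geometric_of_lt_one (by positivity) hw).mul_left (2 * π * |R| * C))
  refine (circleIntegral.norm_integral_le_of_norm_le_const' (C := (‖w‖ * |R|) ^ n * C)
    fun z hz => ?_).trans_eq (by ring)
  rw [norm_smul, norm_pow, norm_mul, ← dist_eq_norm, mem_sphere.mp hz]
  exact mul_le_mul_of_nonneg_left (hC z hz) (by positivity)

end GeometricSeries

theorem one_sub_ofReal_mul_ne_zero {w : ℝ} {z : ℂ} (h : |w| * ‖z‖ < 1) : 1 - (w : ℂ) * z ≠ 0 := by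
  intro hwz
  have hnorm := congrArg norm (sub_eq_zero.mp hwz)
  rw [norm_one, norm_mul, norm_real, Real.norm_eq_abs] at hnorm
  exact h.ne' hnorm

section ContourIntegrand

variable (N : ℕ) (v : ℕ → ℝ)

noncomputable def factorProd (n : ℕ) (z : ℂ) : ℂ :=
  ∏ i ∈ Finset.range n, (1 - (v (N - i) : ℂ) * z)

noncomputable def integrandF (k l : ℕ) (x : ℤ) (a b : ℝ) (z : ℂ) : ℂ :=
  z ^ (x - 1) * exp (b * z + a / z) * factorProd N v (k - 1) z / factorProd N v (l - 1) z

theorem F_eq_integral_integrandF (k l : ℕ) (x : ℤ) (a b r : ℝ) :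
    F N v k l x a b r = (2 * π * I)⁻¹ * ∮ z in C(0, r), integrandF N v k l x a b z :=
  rfl

variable {N v}

theorem factorProd_ne_zero {z : ℂ} (hvz : ∀ j, 1 ≤ j → j ≤ N → |v j| * ‖z‖ < 1) {n : ℕ}
    (hn : n ≤ N) : factorProd N v n z ≠ 0 :=
  Finset.prod_ne_zero_iff.mpr fun i hi =>
    one_sub_ofReal_mul_ne_zero (hvz (N - i) (by simp at hi; omega) (Nat.sub_le _ _))

theorem continuousOn_integrandF {k l : ℕ} {x : ℤ} {a b r : ℝ} (hr : 0 < r)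
    (hl : ∀ z ∈ sphere (0 : ℂ) r, factorProd N v (l - 1) z ≠ 0) :
    ContinuousOn (integrandF N v k l x a b) (sphere 0 r) := by
  have hz : ∀ z ∈ sphere (0 : ℂ) r, z ≠ 0 := fun z hz => ne_zero_of_mem_sphere hr.ne' ⟨z, hz⟩
  have hexp : ContinuousOn (fun z : ℂ => exp (b * z + a / z)) (sphere 0 r) :=
    continuous_exp.comp_continuousOn
      ((continuousOn_const.mul continuousOn_id).add (continuousOn_const.div continuousOn_id hz))
  unfold integrandF factorProd
  refine ContinuousOn.div ?_ (by fun_prop) hl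
  exact ((continuousOn_id.zpow₀ _ fun z hz' => .inl (hz z hz')).mul hexp).mul (by fun_prop)

theorem integrandF_add_nat {k l : ℕ} {x : ℤ} {a b : ℝ} {z : ℂ} (hz : z ≠ 0) (w : ℂ) (m : ℕ) :
    w ^ m * integrandF N v k l (x + m) a b z = (w * z) ^ m * integrandF N v k l x a b z := by
  have hpow : z ^ (x + m - 1) = z ^ m * z ^ (x - 1) := by
    rw [← zpow_natCast, ← zpow_add₀ hz, add_sub_right_comm, add_comm]
  simp only [integrandF, hpow, mul_pow]
  ring

theorem inv_one_sub_mul_integrandF_succ_right (k n : ℕ) (x : ℤ) (a b : ℝ) (z : ℂ) :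
    (1 - (v (N - n) : ℂ) * z)⁻¹ * integrandF N v k (n + 1) x a b z =
      integrandF N v k (n + 1 + 1) x a b z := by
  simp only [integrandF, factorProd, Nat.add_sub_cancel, Finset.prod_range_succ]
  rw [inv_mul_eq_div, div_div]

theorem inv_one_sub_mul_integrandF_succ_left {j l : ℕ} {x : ℤ} {a b : ℝ} {z : ℂ}
    (hz : 1 - (v (N - j) : ℂ) * z ≠ 0) :
    (1 - (v (N - j) : ℂ) * z)⁻¹ * integrandF N v (j + 1 + 1) l x a b z =
      integrandF N v (j + 1) l x a b z := by
  simp only [integrandF, factorProd, Nat.add_sub_cancel, Finset.prod_range_succ]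
  field_simp

theorem hasSum_geometric_mul_F {k l : ℕ} {x : ℤ} {a b r w : ℝ} (hr : 0 < r) (hw : |w| * r < 1)
    (hcont : ContinuousOn (integrandF N v k l x a b) (sphere 0 r)) :
    Summable (fun m : ℕ => ‖((w ^ m : ℝ) : ℂ) * F N v k l (x + m) a b r‖) ∧
      HasSum (fun m : ℕ => ((w ^ m : ℝ) : ℂ) * F N v k l (x + m) a b r)
        ((2 * π * I)⁻¹ * ∮ z in C(0, r), (1 - w * z)⁻¹ * integrandF N v k l x a b z) := by
  have hw' : ‖(w : ℂ)‖ * |r| < 1 := by rwa [norm_real, Real.norm_eq_abs, abs_of_pos hr]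
  have hcont' : ContinuousOn (integrandF N v k l x a b) (sphere 0 |r|) := by
    rwa [abs_of_pos hr]
  have hterm : ∀ m : ℕ, ((w ^ m : ℝ) : ℂ) * F N v k l (x + m) a b r =
      (2 * π * I)⁻¹ * ∮ z in C(0, r), ((w : ℂ) * (z - 0)) ^ m • integrandF N v k l x a b z := by
    intro m
    rw [F_eq_integral_integrandF, mul_left_comm, ← circleIntegral.integral_const_mul]
    congr 1
    refine circleIntegral.integral_congr hr.le fun z hz => ?_
    rw [ofReal_pow, integrandF_add_nat (ne_zero_of_mem_sphere hr.ne' ⟨z, hz⟩), sub_zero,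
      smul_eq_mul]
  simp only [hterm]
  refine ⟨?_, ?_⟩
  · simpa only [norm_mul] using
      (summable_norm_circleIntegral_geometric_smul hcont' hw').mul_left ‖(2 * π * I : ℂ)⁻¹‖
  · simpa only [sub_zero, smul_eq_mul] using
      (hasSum_circleIntegral_geometric_smul hcont'.circleIntegrable' hw').mul_left
        (2 * π * I : ℂ)⁻¹

end ContourIntegrand

theorem stmt5_general (N : ℕ) (v : ℕ → ℝ)
    (hv : ∀ i, 1 ≤ i → i ≤ N → 0 < v i)
    (r : ℝ) (hr : 0 < r) (hr' : ∀ j, 1 ≤ j → j ≤ N → r < 1 / v j)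
    (a b : ℝ) (x : ℤ) :
    (∀ k l, 1 ≤ k → k ≤ N → 1 ≤ l → l ≤ N - 1 →
      Summable (fun m : ℕ => ‖((v (N + 1 - l) ^ m : ℝ) : ℂ) * F N v k l (x + m) a b r‖) ∧
      ∑' m : ℕ, ((v (N + 1 - l) ^ m : ℝ) : ℂ) * F N v k l (x + m) a b r
        = F N v k (l + 1) x a b r) ∧
    (∀ k l, 2 ≤ k → k ≤ N → 1 ≤ l → l ≤ N →
      Summable (fun m : ℕ => ‖((v (N + 2 - k) ^ m : ℝ) : ℂ) * F N v k l (x + m) a b r‖) ∧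
      ∑' m : ℕ, ((v (N + 2 - k) ^ m : ℝ) : ℂ) * F N v k l (x + m) a b r
        = F N v (k - 1) l x a b r) := by
  have hvr : ∀ j, 1 ≤ j → j ≤ N → |v j| * r < 1 := fun j hj hjN => by
    rw [abs_of_pos (hv j hj hjN), ← lt_div_iff₀' (hv j hj hjN)]
    exact hr' j hj hjN
  have hvz : ∀ z ∈ sphere (0 : ℂ) r, ∀ j, 1 ≤ j → j ≤ N → |v j| * ‖z‖ < 1 := fun z hz => by
    rwa [mem_sphere_zero_iff_norm.mp hz]
  have hcont : ∀ k l, l ≤ N + 1 → ContinuousOn (integrandF N v k l x a b) (sphere 0 r) :=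
    fun k l hl => continuousOn_integrandF hr fun z hz => factorProd_ne_zero (hvz z hz) (by omega)
  constructor
  · rintro k (_ | n) - - hl hn
    · omega
    obtain ⟨hsum, hhas⟩ := hasSum_geometric_mul_F (w := v (N - n)) hr
      (hvr _ (by omega) (Nat.sub_le _ _)) (hcont k (n + 1) (by omega))
    rw [show N + 1 - (n + 1) = N - n by omega]
    refine ⟨hsum, hhas.tsum_eq.trans ?_⟩
    simp only [inv_one_sub_mul_integrandF_succ_right, F_eq_integral_integrandF]
  · rintro (_ | _ | j) l hk hkN - hl
    iterate 2 omega
    obtain ⟨hsum, hhas⟩ := hasSum_geometric_mul_F (w := v (N - j)) hr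
      (hvr _ (by omega) (Nat.sub_le _ _)) (hcont (j + 1 + 1) l (by omega))
    rw [show N + 2 - (j + 1 + 1) = N - j by omega]
    refine ⟨hsum, hhas.tsum_eq.trans ?_⟩
    rw [F_eq_integral_integrandF, Nat.add_sub_cancel]
    congr 1
    refine circleIntegral.integral_congr hr.le fun z hz => inv_one_sub_mul_integrandF_succ_left ?_
    exact one_sub_ofReal_mul_ne_zero (hvz z hz (N - j) (by omega) (Nat.sub_le _ _))

/-- (i) `∑_{y ≥ x} v_{N+1−l}^{y−x} F_{k,l}(y,a,b) = F_{k,l+1}(x,a,b)`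
and (ii) `∑_{y ≥ x} v_{N+2−k}^{y−x} F_{k,l}(y,a,b) = F_{k−1,l}(x,a,b)`, both series
converging absolutely (the sums over `y ≥ x` are parametrized by `y = x + m`, `m : ℕ`). -/
theorem stmt5 (N : ℕ) (hN : 1 ≤ N) (v : ℕ → ℝ)
    (hv : ∀ i, 1 ≤ i → i ≤ N → 0 < v i)
    (r : ℝ) (hr : 0 < r) (hr' : ∀ j, 1 ≤ j → j ≤ N → r < 1 / v j)
    (a b : ℝ) (x : ℤ) :
    (∀ k l, 1 ≤ k → k ≤ N → 1 ≤ l → l ≤ N - 1 →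
      Summable (fun m : ℕ => ‖((v (N + 1 - l) ^ m : ℝ) : ℂ) * F N v k l (x + m) a b r‖) ∧
      ∑' m : ℕ, ((v (N + 1 - l) ^ m : ℝ) : ℂ) * F N v k l (x + m) a b r
        = F N v k (l + 1) x a b r) ∧
    (∀ k l, 2 ≤ k → k ≤ N → 1 ≤ l → l ≤ N →
      Summable (fun m : ℕ => ‖((v (N + 2 - k) ^ m : ℝ) : ℂ) * F N v k l (x + m) a b r‖) ∧
      ∑' m : ℕ, ((v (N + 2 - k) ^ m : ℝ) : ℂ) * F N v k l (x + m) a b r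
        = F N v (k - 1) l x a b r) :=
  stmt5_general N v hv r hr hr' a b x
end

section
/- Let n₁, n₂ ≥ 1 be integers, x₁, x₂ ∈ ℤ, and a₁, b₁, a₂, b₂ ∈ ℝ. For 1 ≤ k ≤ n₂ set Ψ^{(1)}_{n₁−k}(x₁) = (1/(2πi)) ∮_{|w−1|=R} (w−1)^{n₁−k} w^{−(x₁+n₁+1)} e^{a₁w + b₁/w} dw and Φ^{(2)}_{n₂−k}(x₂) = (1/(2πi)) ∮_{|z−1|=r} z^{x₂+n₂} (z−1)^{−(n₂−k+1)} e^{−a₂z − b₂/z} dz. Then for any radii 0 < r < 1 < R, ∑_{k=1}^{n₂} Ψ^{(1)}_{n₁−k}(x₁) Φ^{(2)}_{n₂−k}(x₂) = (1/(2πi)²) ∮_{|z−1|=r} dz ∮_{|w−1|=R} dw e^{a₁w + b₁/w − a₂z − b₂/z} (w−1)^{n₁} z^{x₂+n₂} / ( (z−1)^{n₂} w^{x₁+n₁+1} (w−z) ). -/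
/-!
For `w` on the large circle and `z` on the small one, the sum over `k` of the product of the two
integrands is a finite geometric series in `(z - 1) / (w - 1)`. Summing it splits the product
into the kernel integrand, which carries the factor `1 / (w - z)`, minus a remainder whose only
singularities in `z` are `z = 0` and `z = w`, both outside the closed disk `|z - 1| ≤ r`; by
Cauchy's theorem the remainder integrates to zero over `|z - 1| = r`. Fubini's theorem for the
continuous integrand on the torus then exchanges the two contour integrals.
-/

open Complex Metric Set MeasureTheory
open scoped Real

theorem circleIntegral_comm {E : Type*} [NormedAddCommGroup E] [NormedSpace ℂ E]
    {f : ℂ → ℂ → E} {c₁ c₂ : ℂ} {R₁ R₂ : ℝ} (hR₁ : 0 ≤ R₁) (hR₂ : 0 ≤ R₂)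
    (hf : ContinuousOn (Function.uncurry f) (sphere c₁ R₁ ×ˢ sphere c₂ R₂)) :
    (∮ w in C(c₁, R₁), ∮ z in C(c₂, R₂), f w z) = ∮ z in C(c₂, R₂), ∮ w in C(c₁, R₁), f w z := by
  set g : ℝ → ℝ → E := fun θ η => deriv (circleMap c₁ R₁) θ • deriv (circleMap c₂ R₂) η •
    f (circleMap c₁ R₁ θ) (circleMap c₂ R₂ η)
  have hg : Continuous (Function.uncurry g) := by
    have hf' : Continuous fun p : ℝ × ℝ => f (circleMap c₁ R₁ p.1) (circleMap c₂ R₂ p.2) :=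
      hf.comp_continuous (f := fun p : ℝ × ℝ => (circleMap c₁ R₁ p.1, circleMap c₂ R₂ p.2))
        (by fun_prop) fun p => ⟨circleMap_mem_sphere _ hR₁ _, circleMap_mem_sphere _ hR₂ _⟩
    simp only [g, deriv_circleMap]
    exact .smul (by fun_prop) (.smul (by fun_prop) hf')
  calc (∮ w in C(c₁, R₁), ∮ z in C(c₂, R₂), f w z)
      = ∫ θ in 0..2 * π, ∫ η in 0..2 * π, g θ η := by
        simp only [circleIntegral, g, intervalIntegral.integral_smul]
    _ = ∫ η in 0..2 * π, ∫ θ in 0..2 * π, g θ η :=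
        intervalIntegral_intervalIntegral_swap <|
          (hg.continuousOn.integrableOn_compact (isCompact_uIcc.prod isCompact_uIcc)).mono_set
            (prod_mono uIoc_subset_uIcc uIoc_subset_uIcc)
    _ = ∮ z in C(c₂, R₂), ∮ w in C(c₁, R₁), f w z := by
        simp only [circleIntegral, g, intervalIntegral.integral_smul,
          smul_comm (deriv (circleMap c₁ R₁) _)]

theorem sum_Icc_zpow_mul_zpow_eq {K : Type*} [Field K] {a b : K} (ha : a ≠ 0) (hb : b ≠ 0)
    (hab : a ≠ b) (N : ℤ) (n : ℕ) :
    ∑ k ∈ Finset.Icc 1 n, a ^ (N - k) * b ^ (-((n : ℤ) - k + 1)) =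
      (a ^ N / b ^ n - a ^ (N - n)) / (a - b) := by
  set t : ℕ → K := fun j => a ^ (N - j) * b ^ ((j : ℤ) - n) / (a - b)
  have telescope (j : ℕ) :
      a ^ (N - (j + 1 : ℕ)) * b ^ (-((n : ℤ) - (j + 1 : ℕ) + 1)) = t j - t (j + 1) := by
    simp only [t]
    push_cast
    rw [show N - j = N - (j + 1) + 1 by omega, show -((n : ℤ) - (j + 1) + 1) = j - n by omega,
      show (j : ℤ) + 1 - n = j - n + 1 by omega, zpow_add_one₀ ha, zpow_add_one₀ hb,
      div_sub_div_same, eq_div_iff (sub_ne_zero.2 hab)]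
    ring
  rw [← Finset.Ico_add_one_right_eq_Icc, Finset.sum_Ico_eq_sum_range, Nat.add_sub_cancel]
  simp only [add_comm 1, telescope, Finset.sum_range_sub']
  simp only [t, Nat.cast_zero, sub_zero, zero_sub, sub_self, zpow_zero, mul_one, zpow_neg,
    zpow_natCast]
  ring

theorem sphere_one_subset_setOf_ne_zero_ne_one {r : ℝ} (hr0 : 0 < r) (hr1 : r ≠ 1) :
    sphere (1 : ℂ) r ⊆ {z | z ≠ 0 ∧ z ≠ 1} := by
  refine fun z hz => ⟨?_, ne_of_mem_sphere hz hr0.ne'⟩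
  rintro rfl
  simp [eq_comm, hr1] at hz

theorem closedBall_one_subset_setOf_ne_zero_ne {r : ℝ} (hr1 : r < 1) {w : ℂ}
    (hw : w ∉ closedBall (1 : ℂ) r) : closedBall (1 : ℂ) r ⊆ {z | z ≠ 0 ∧ z ≠ w} := by
  refine fun z hz => ⟨?_, fun h => hw (h ▸ hz)⟩
  rintro rfl
  simp at hz
  linarith

namespace PushASEP

variable (n₁ n₂ : ℕ) (x₁ x₂ : ℤ) (a₁ b₁ a₂ b₂ : ℂ)

/- `psiIntegrand n₁ x₁ a₁ b₁ k` and `phiIntegrand n₂ x₂ a₂ b₂ k` are the integrands of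
`Ψ^{(1)}_{n₁-k}(x₁)` and `Φ^{(2)}_{n₂-k}(x₂)`. -/

noncomputable def psiIntegrand (k : ℕ) (w : ℂ) : ℂ :=
  (w - 1) ^ ((n₁ : ℤ) - k) * w ^ (-(x₁ + (n₁ : ℤ) + 1)) * exp (a₁ * w + b₁ / w)

noncomputable def phiIntegrand (k : ℕ) (z : ℂ) : ℂ :=
  z ^ (x₂ + (n₂ : ℤ)) * (z - 1) ^ (-((n₂ : ℤ) - k + 1)) * exp (-(a₂ * z) - b₂ / z)

noncomputable def kernelIntegrand (w z : ℂ) : ℂ :=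
  exp (a₁ * w + b₁ / w - a₂ * z - b₂ / z) * (w - 1) ^ n₁ * z ^ (x₂ + (n₂ : ℤ)) /
    ((z - 1) ^ n₂ * w ^ (x₁ + (n₁ : ℤ) + 1) * (w - z))

noncomputable def remainderIntegrand (w z : ℂ) : ℂ :=
  exp (a₁ * w + b₁ / w - a₂ * z - b₂ / z) * (w - 1) ^ ((n₁ : ℤ) - n₂) * z ^ (x₂ + (n₂ : ℤ)) *
    w ^ (-(x₁ + (n₁ : ℤ) + 1)) / (w - z)

variable {n₁ n₂ x₁ x₂ a₁ b₁ a₂ b₂}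

theorem sum_psiIntegrand_mul_phiIntegrand {w z : ℂ} (hw1 : w ≠ 1) (hz1 : z ≠ 1) (hwz : w ≠ z) :
    ∑ k ∈ Finset.Icc 1 n₂, psiIntegrand n₁ x₁ a₁ b₁ k w * phiIntegrand n₂ x₂ a₂ b₂ k z =
      kernelIntegrand n₁ n₂ x₁ x₂ a₁ b₁ a₂ b₂ w z -
        remainderIntegrand n₁ n₂ x₁ x₂ a₁ b₁ a₂ b₂ w z := by
  have hexp : exp (a₁ * w + b₁ / w) * exp (-(a₂ * z) - b₂ / z) =
      exp (a₁ * w + b₁ / w - a₂ * z - b₂ / z) := by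
    rw [← exp_add]; congr 1; ring
  have hsum :
      ∑ k ∈ Finset.Icc 1 n₂, psiIntegrand n₁ x₁ a₁ b₁ k w * phiIntegrand n₂ x₂ a₂ b₂ k z =
        w ^ (-(x₁ + (n₁ : ℤ) + 1)) * z ^ (x₂ + (n₂ : ℤ)) *
          exp (a₁ * w + b₁ / w - a₂ * z - b₂ / z) *
          ∑ k ∈ Finset.Icc 1 n₂, (w - 1) ^ ((n₁ : ℤ) - k) * (z - 1) ^ (-((n₂ : ℤ) - k + 1)) := by
    rw [Finset.mul_sum, ← hexp]
    refine Finset.sum_congr rfl fun k _ => ?_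
    simp only [psiIntegrand, phiIntegrand]
    ring
  rw [hsum, sum_Icc_zpow_mul_zpow_eq (sub_ne_zero.2 hw1) (sub_ne_zero.2 hz1) (by simpa using hwz),
    sub_sub_sub_cancel_right, kernelIntegrand, remainderIntegrand, zpow_neg,
    ← zpow_natCast (w - 1) n₁]
  field_simp

theorem continuousOn_psiIntegrand (k : ℕ) :
    ContinuousOn (psiIntegrand n₁ x₁ a₁ b₁ k) {w | w ≠ 0 ∧ w ≠ 1} := by
  rintro w ⟨hw0, hw1⟩
  refine ContinuousAt.continuousWithinAt ?_
  unfold psiIntegrand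
  fun_prop (disch := simp [*, sub_eq_zero])

theorem continuousOn_phiIntegrand (k : ℕ) :
    ContinuousOn (phiIntegrand n₂ x₂ a₂ b₂ k) {z | z ≠ 0 ∧ z ≠ 1} := by
  rintro z ⟨hz0, hz1⟩
  refine ContinuousAt.continuousWithinAt ?_
  unfold phiIntegrand
  fun_prop (disch := simp [*, sub_eq_zero])

theorem continuousOn_kernelIntegrand :
    ContinuousOn (Function.uncurry (kernelIntegrand n₁ n₂ x₁ x₂ a₁ b₁ a₂ b₂))
      {p | p.1 ≠ 0 ∧ p.2 ≠ 0 ∧ p.2 ≠ 1 ∧ p.1 ≠ p.2} := by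
  rintro p ⟨hw0, hz0, hz1, hwz⟩
  refine ContinuousAt.continuousWithinAt ?_
  simp only [Function.uncurry_def, kernelIntegrand]
  fun_prop (disch := simp [*, sub_eq_zero, zpow_ne_zero])

theorem differentiableOn_remainderIntegrand (w : ℂ) :
    DifferentiableOn ℂ (remainderIntegrand n₁ n₂ x₁ x₂ a₁ b₁ a₂ b₂ w) {z | z ≠ 0 ∧ z ≠ w} := by
  rintro z ⟨hz0, hzw⟩
  refine DifferentiableAt.differentiableWithinAt ?_
  unfold remainderIntegrand
  fun_prop (disch := simp [*, sub_eq_zero, eq_comm (a := w)])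

theorem sum_psiIntegrand_mul_circleIntegral_phiIntegrand {r : ℝ} (hr0 : 0 < r) (hr1 : r < 1)
    {w : ℂ} (hw0 : w ≠ 0) (hw1 : w ≠ 1) (hw : w ∉ closedBall (1 : ℂ) r) :
    ∑ k ∈ Finset.Icc 1 n₂,
        psiIntegrand n₁ x₁ a₁ b₁ k w * ∮ z in C(1, r), phiIntegrand n₂ x₂ a₂ b₂ k z =
      ∮ z in C(1, r), kernelIntegrand n₁ n₂ x₁ x₂ a₁ b₁ a₂ b₂ w z := by
  have hsphere := sphere_one_subset_setOf_ne_zero_ne_one hr0 hr1.ne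
  have hball := closedBall_one_subset_setOf_ne_zero_ne hr1 hw
  have hdisk : DifferentiableOn ℂ (remainderIntegrand n₁ n₂ x₁ x₂ a₁ b₁ a₂ b₂ w)
      (closedBall 1 r) :=
    (differentiableOn_remainderIntegrand w).mono hball
  have hsummand (k : ℕ) : CircleIntegrable
      (fun z => psiIntegrand n₁ x₁ a₁ b₁ k w * phiIntegrand n₂ x₂ a₂ b₂ k z) 1 r :=
    (continuousOn_const.mul ((continuousOn_phiIntegrand k).mono hsphere)).circleIntegrable hr0.le
  have hkernel : CircleIntegrable (kernelIntegrand n₁ n₂ x₁ x₂ a₁ b₁ a₂ b₂ w) 1 r :=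
    (continuousOn_kernelIntegrand.comp (Continuous.prodMk_right w).continuousOn fun z hz =>
      ⟨hw0, (hsphere hz).1, (hsphere hz).2, (hball (sphere_subset_closedBall hz)).2.symm⟩
      ).circleIntegrable hr0.le
  have hremainder : CircleIntegrable (remainderIntegrand n₁ n₂ x₁ x₂ a₁ b₁ a₂ b₂ w) 1 r :=
    (hdisk.continuousOn.mono sphere_subset_closedBall).circleIntegrable hr0.le
  have hcauchy : (∮ z in C(1, r), remainderIntegrand n₁ n₂ x₁ x₂ a₁ b₁ a₂ b₂ w z) = 0 :=
    DiffContOnCl.circleIntegral_eq_zero hr0.le <|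
      (closure_ball (1 : ℂ) hr0.ne' ▸ hdisk).diffContOnCl
  calc ∑ k ∈ Finset.Icc 1 n₂,
        psiIntegrand n₁ x₁ a₁ b₁ k w * ∮ z in C(1, r), phiIntegrand n₂ x₂ a₂ b₂ k z
      = ∮ z in C(1, r), ∑ k ∈ Finset.Icc 1 n₂,
          psiIntegrand n₁ x₁ a₁ b₁ k w * phiIntegrand n₂ x₂ a₂ b₂ k z := by
        simp only [← circleIntegral.integral_const_mul]
        exact (circleIntegral.integral_fun_sum fun k _ => hsummand k).symm
    _ = ∮ z in C(1, r), kernelIntegrand n₁ n₂ x₁ x₂ a₁ b₁ a₂ b₂ w z -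
          remainderIntegrand n₁ n₂ x₁ x₂ a₁ b₁ a₂ b₂ w z :=
        circleIntegral.integral_congr hr0.le fun z hz =>
          sum_psiIntegrand_mul_phiIntegrand hw1 (hsphere hz).2
            (hball (sphere_subset_closedBall hz)).2.symm
    _ = ∮ z in C(1, r), kernelIntegrand n₁ n₂ x₁ x₂ a₁ b₁ a₂ b₂ w z := by
        rw [circleIntegral.integral_sub hkernel hremainder, hcauchy, sub_zero]

variable (n₁ n₂ x₁ x₂ a₁ b₁ a₂ b₂) in
theorem sum_circleIntegral_psiIntegrand_mul_circleIntegral_phiIntegrand {r R : ℝ} (hr0 : 0 < r)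
    (hr1 : r < 1) (hR : 1 < R) :
    ∑ k ∈ Finset.Icc 1 n₂,
        (∮ w in C(1, R), psiIntegrand n₁ x₁ a₁ b₁ k w) *
          ∮ z in C(1, r), phiIntegrand n₂ x₂ a₂ b₂ k z =
      ∮ z in C(1, r), ∮ w in C(1, R), kernelIntegrand n₁ n₂ x₁ x₂ a₁ b₁ a₂ b₂ w z := by
  have hR0 : 0 ≤ R := by linarith
  have hsphereR := sphere_one_subset_setOf_ne_zero_ne_one (zero_lt_one.trans hR) hR.ne'
  have hspherer := sphere_one_subset_setOf_ne_zero_ne_one hr0 hr1.ne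
  have houtside {w : ℂ} (hw : w ∈ sphere (1 : ℂ) R) : w ∉ closedBall (1 : ℂ) r :=
    fun h => sphere_disjoint_ball.ne_of_mem hw (closedBall_subset_ball (hr1.trans hR) h) rfl
  calc ∑ k ∈ Finset.Icc 1 n₂,
        (∮ w in C(1, R), psiIntegrand n₁ x₁ a₁ b₁ k w) *
          ∮ z in C(1, r), phiIntegrand n₂ x₂ a₂ b₂ k z
      = ∮ w in C(1, R), ∑ k ∈ Finset.Icc 1 n₂,
          psiIntegrand n₁ x₁ a₁ b₁ k w * ∮ z in C(1, r), phiIntegrand n₂ x₂ a₂ b₂ k z := by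
        simp only [← smul_eq_mul, ← circleIntegral.integral_smul_const]
        refine (circleIntegral.integral_fun_sum fun k _ => ?_).symm
        exact (((continuousOn_psiIntegrand k).mono hsphereR).smul
          continuousOn_const).circleIntegrable hR0
    _ = ∮ w in C(1, R), ∮ z in C(1, r), kernelIntegrand n₁ n₂ x₁ x₂ a₁ b₁ a₂ b₂ w z :=
        circleIntegral.integral_congr hR0 fun w hw =>
          sum_psiIntegrand_mul_circleIntegral_phiIntegrand hr0 hr1
            (hsphereR hw).1 (hsphereR hw).2 (houtside hw)
    _ = ∮ z in C(1, r), ∮ w in C(1, R), kernelIntegrand n₁ n₂ x₁ x₂ a₁ b₁ a₂ b₂ w z := by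
        refine circleIntegral_comm hR0 hr0.le (continuousOn_kernelIntegrand.mono ?_)
        rintro ⟨w, z⟩ ⟨hw, hz⟩
        exact ⟨(hsphereR hw).1, (hspherer hz).1, (hspherer hz).2,
          ((closedBall_one_subset_setOf_ne_zero_ne hr1 (houtside hw))
            (sphere_subset_closedBall hz)).2.symm⟩

end PushASEP

theorem stmt9_general (n₁ n₂ : ℕ) (x₁ x₂ : ℤ)
    (a₁ b₁ a₂ b₂ : ℝ) (r R : ℝ) (hr0 : 0 < r) (hr1 : r < 1) (hR : 1 < R) :
    ∑ k ∈ Finset.Icc 1 n₂,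
      ((2 * (Real.pi : ℂ) * Complex.I)⁻¹ *
        ∮ w in C(1, R), (w - 1) ^ ((n₁ : ℤ) - k) * w ^ (-(x₁ + (n₁ : ℤ) + 1)) *
          Complex.exp ((a₁ : ℂ) * w + (b₁ : ℂ) / w)) *
      ((2 * (Real.pi : ℂ) * Complex.I)⁻¹ *
        ∮ z in C(1, r), z ^ (x₂ + (n₂ : ℤ)) * (z - 1) ^ (-((n₂ : ℤ) - k + 1)) *
          Complex.exp (-((a₂ : ℂ) * z) - (b₂ : ℂ) / z))
    = (2 * (Real.pi : ℂ) * Complex.I)⁻¹ *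
        ∮ z in C(1, r), (2 * (Real.pi : ℂ) * Complex.I)⁻¹ *
          ∮ w in C(1, R),
            Complex.exp ((a₁ : ℂ) * w + (b₁ : ℂ) / w - (a₂ : ℂ) * z - (b₂ : ℂ) / z) *
              (w - 1) ^ n₁ * z ^ (x₂ + (n₂ : ℤ)) /
              ((z - 1) ^ n₂ * w ^ (x₁ + (n₁ : ℤ) + 1) * (w - z)) := by
  have h := PushASEP.sum_circleIntegral_psiIntegrand_mul_circleIntegral_phiIntegrand
    n₁ n₂ x₁ x₂ a₁ b₁ a₂ b₂ hr0 hr1 hR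
  simp only [PushASEP.psiIntegrand, PushASEP.phiIntegrand, PushASEP.kernelIntegrand] at h
  rw [circleIntegral.integral_const_mul, ← mul_assoc, ← h, Finset.mul_sum]
  exact Finset.sum_congr rfl fun k _ => by ring

/-- summation identity
`∑_{k=1}^{n₂} Ψ^{(1)}_{n₁−k}(x₁) Φ^{(2)}_{n₂−k}(x₂)` equals the double contour
integral of the main part of the finite-time step-initial-condition PushASEP kernel. -/
theorem stmt9 (n₁ n₂ : ℕ) (hn₁ : 1 ≤ n₁) (hn₂ : 1 ≤ n₂) (x₁ x₂ : ℤ)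
    (a₁ b₁ a₂ b₂ : ℝ) (r R : ℝ) (hr0 : 0 < r) (hr1 : r < 1) (hR : 1 < R) :
    ∑ k ∈ Finset.Icc 1 n₂,
      ((2 * (Real.pi : ℂ) * Complex.I)⁻¹ *
        ∮ w in C(1, R), (w - 1) ^ ((n₁ : ℤ) - k) * w ^ (-(x₁ + (n₁ : ℤ) + 1)) *
          Complex.exp ((a₁ : ℂ) * w + (b₁ : ℂ) / w)) *
      ((2 * (Real.pi : ℂ) * Complex.I)⁻¹ *
        ∮ z in C(1, r), z ^ (x₂ + (n₂ : ℤ)) * (z - 1) ^ (-((n₂ : ℤ) - k + 1)) *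
          Complex.exp (-((a₂ : ℂ) * z) - (b₂ : ℂ) / z))
    = (2 * (Real.pi : ℂ) * Complex.I)⁻¹ *
        ∮ z in C(1, r), (2 * (Real.pi : ℂ) * Complex.I)⁻¹ *
          ∮ w in C(1, R),
            Complex.exp ((a₁ : ℂ) * w + (b₁ : ℂ) / w - (a₂ : ℂ) * z - (b₂ : ℂ) / z) *
              (w - 1) ^ n₁ * z ^ (x₂ + (n₂ : ℤ)) /
              ((z - 1) ^ n₂ * w ^ (x₁ + (n₁ : ℤ) + 1) * (w - z)) :=
  stmt9_general n₁ n₂ x₁ x₂ a₁ b₁ a₂ b₂ r R hr0 hr1 hR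
end
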